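/- arXiv:math/0309411 — 4 statements merged into one kernel-verified Lean document; each statement's English description precedes it below -/
import Mathlib

section
/- For each integer k ≥ 1, the endomorphism φ_k of the free group F_k on the 4k+4 generators a, b, c, d, x_0, …, x_{2k−1}, y_0, …, y_{2k−1}, determined by a ↦ a·x_0·y_0, b ↦ b·y_0⁻¹·x_0⁻¹, c ↦ d, d ↦ d·y_1·x_0, x_i ↦ x_{i+1} for 0 ≤ i ≤ 2k−2, x_{2k−1} ↦ a⁻¹·b·y_0⁻¹, y_i ↦ y_{i+1} for 0 ≤ i ≤ 2k−2, and y_{2k−1} ↦ c⁻¹·b, is an automorphism of F_k (i.e., it is bijective). -/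
/-- The generator of the free group on `4k+4` letters with index `n` (taken mod `4k+4`).
Labeling: `0 = a`, `1 = b`, `2 = c`, `3 = d`, `4 + i = xᵢ` for `0 ≤ i ≤ 2k-1`,
`2k + 4 + i = yᵢ` for `0 ≤ i ≤ 2k-1`. -/
def gen (k n : ℕ) : FreeGroup (Fin (4 * k + 4)) :=
  FreeGroup.of ⟨n % (4 * k + 4), Nat.mod_lt _ (by omega)⟩

/-- The images of the generators under the endomorphism `φₖ`:
`a ↦ a x₀ y₀`, `b ↦ b y₀⁻¹ x₀⁻¹`, `c ↦ d`, `d ↦ d y₁ x₀`,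
`xᵢ ↦ xᵢ₊₁` for `0 ≤ i ≤ 2k-2`, `x_{2k-1} ↦ a⁻¹ b y₀⁻¹`,
`yᵢ ↦ yᵢ₊₁` for `0 ≤ i ≤ 2k-2`, `y_{2k-1} ↦ c⁻¹ b`. -/
def tgtFun (k : ℕ) (i : Fin (4 * k + 4)) : FreeGroup (Fin (4 * k + 4)) :=
  if i.val = 0 then gen k 0 * gen k 4 * gen k (2 * k + 4)
  else if i.val = 1 then gen k 1 * (gen k (2 * k + 4))⁻¹ * (gen k 4)⁻¹
  else if i.val = 2 then gen k 3
  else if i.val = 3 then gen k 3 * gen k (2 * k + 5) * gen k 4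
  else if i.val = 2 * k + 3 then (gen k 0)⁻¹ * gen k 1 * (gen k (2 * k + 4))⁻¹
  else if i.val = 4 * k + 3 then (gen k 2)⁻¹ * gen k 1
  else gen k (i.val + 1)

/-- The endomorphism `φₖ` of the free group on `4k+4` generators. -/
def phi (k : ℕ) : FreeGroup (Fin (4 * k + 4)) →* FreeGroup (Fin (4 * k + 4)) :=
  FreeGroup.lift (tgtFun k)

def psiFun (k : ℕ) (i : Fin (4 * k + 4)) : FreeGroup (Fin (4 * k + 4)) :=
  if i.val = 0 then
    gen k 1 * (gen k (2 * k + 4))⁻¹ * (gen k 2)⁻¹ * gen k 3 * (gen k (2 * k + 3))⁻¹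
  else if i.val = 1 then
    gen k 1 * gen k (2 * k + 3) * (gen k 3)⁻¹ * gen k 2 * gen k (2 * k + 4) * (gen k 1)⁻¹ * gen k 0
  else if i.val = 2 then
    gen k 1 * gen k (2 * k + 3) * (gen k 3)⁻¹ * gen k 2 * gen k (2 * k + 4) * (gen k 1)⁻¹ * gen k 0 * (gen k (4 * k + 3))⁻¹
  else if i.val = 3 then gen k 2
  else if i.val = 4 then (gen k (2 * k + 4))⁻¹ * (gen k 2)⁻¹ * gen k 3
  else if i.val = 2 * k + 4 then
    (gen k 3)⁻¹ * gen k 2 * gen k (2 * k + 4) * gen k (2 * k + 3) * (gen k 3)⁻¹ * gen k 2 * gen k (2 * k + 4) * (gen k 1)⁻¹ * gen k 0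
  else gen k (i.val - 1)

def psi (k : ℕ) : FreeGroup (Fin (4 * k + 4)) →* FreeGroup (Fin (4 * k + 4)) :=
  FreeGroup.lift (psiFun k)

lemma gen_eq (k n : ℕ) (h : n < 4 * k + 4) : gen k n = FreeGroup.of ⟨n, h⟩ := by
  simp [gen, Nat.mod_eq_of_lt h]

lemma phi_gen (k n : ℕ) (h : n < 4 * k + 4) : phi k (gen k n) = tgtFun k ⟨n, h⟩ := by
  rw [gen_eq k n h]; exact FreeGroup.lift_apply_of

lemma psi_gen (k n : ℕ) (h : n < 4 * k + 4) : psi k (gen k n) = psiFun k ⟨n, h⟩ := by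
  rw [gen_eq k n h]; exact FreeGroup.lift_apply_of

-- psi evaluations
lemma psi0 (k : ℕ) (hk : 1 ≤ k) : psi k (gen k 0) =
    gen k 1 * (gen k (2 * k + 4))⁻¹ * (gen k 2)⁻¹ * gen k 3 * (gen k (2 * k + 3))⁻¹ := by
  rw [psi_gen k 0 (by omega)]; simp only [psiFun, Fin.val_mk]
  split_ifs <;> first | rfl | omega | contradiction

lemma psi1 (k : ℕ) (hk : 1 ≤ k) : psi k (gen k 1) =
    gen k 1 * gen k (2 * k + 3) * (gen k 3)⁻¹ * gen k 2 * gen k (2 * k + 4) * (gen k 1)⁻¹ * gen k 0 := by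
  rw [psi_gen k 1 (by omega)]; simp only [psiFun, Fin.val_mk]
  split_ifs <;> first | rfl | omega | contradiction

lemma psi2 (k : ℕ) (hk : 1 ≤ k) : psi k (gen k 2) =
    gen k 1 * gen k (2 * k + 3) * (gen k 3)⁻¹ * gen k 2 * gen k (2 * k + 4) * (gen k 1)⁻¹ * gen k 0 * (gen k (4 * k + 3))⁻¹ := by
  rw [psi_gen k 2 (by omega)]; simp only [psiFun, Fin.val_mk]
  split_ifs <;> first | rfl | omega | contradiction

lemma psi3 (k : ℕ) (hk : 1 ≤ k) : psi k (gen k 3) = gen k 2 := by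
  rw [psi_gen k 3 (by omega)]; simp only [psiFun, Fin.val_mk]
  split_ifs <;> first | rfl | omega | contradiction

lemma psi4 (k : ℕ) (hk : 1 ≤ k) : psi k (gen k 4) = (gen k (2 * k + 4))⁻¹ * (gen k 2)⁻¹ * gen k 3 := by
  rw [psi_gen k 4 (by omega)]; simp only [psiFun, Fin.val_mk]
  split_ifs <;> first | rfl | omega | contradiction

lemma psiY0 (k : ℕ) (hk : 1 ≤ k) : psi k (gen k (2 * k + 4)) =
    (gen k 3)⁻¹ * gen k 2 * gen k (2 * k + 4) * gen k (2 * k + 3) * (gen k 3)⁻¹ * gen k 2 * gen k (2 * k + 4) * (gen k 1)⁻¹ * gen k 0 := by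
  rw [psi_gen k (2 * k + 4) (by omega)]; simp only [psiFun, Fin.val_mk]
  split_ifs <;> first | rfl | omega | contradiction

lemma psiMid (k : ℕ) (hk : 1 ≤ k) (n : ℕ) (h5 : 5 ≤ n) (hn : n < 4 * k + 4) (hne : n ≠ 2 * k + 4) :
    psi k (gen k n) = gen k (n - 1) := by
  rw [psi_gen k n hn]; simp only [psiFun, Fin.val_mk]
  split_ifs <;> first | rfl | omega | contradiction

-- phi evaluations
lemma phi0 (k : ℕ) (hk : 1 ≤ k) : phi k (gen k 0) = gen k 0 * gen k 4 * gen k (2 * k + 4) := by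
  rw [phi_gen k 0 (by omega)]; simp only [tgtFun, Fin.val_mk]
  split_ifs <;> first | rfl | omega | contradiction

lemma phi1 (k : ℕ) (hk : 1 ≤ k) : phi k (gen k 1) = gen k 1 * (gen k (2 * k + 4))⁻¹ * (gen k 4)⁻¹ := by
  rw [phi_gen k 1 (by omega)]; simp only [tgtFun, Fin.val_mk]
  split_ifs <;> first | rfl | omega | contradiction

lemma phi2 (k : ℕ) (hk : 1 ≤ k) : phi k (gen k 2) = gen k 3 := by
  rw [phi_gen k 2 (by omega)]; simp only [tgtFun, Fin.val_mk]
  split_ifs <;> first | rfl | omega | contradiction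

lemma phi3 (k : ℕ) (hk : 1 ≤ k) : phi k (gen k 3) = gen k 3 * gen k (2 * k + 5) * gen k 4 := by
  rw [phi_gen k 3 (by omega)]; simp only [tgtFun, Fin.val_mk]
  split_ifs <;> first | rfl | omega | contradiction

lemma phiX (k : ℕ) (hk : 1 ≤ k) : phi k (gen k (2 * k + 3)) =
    (gen k 0)⁻¹ * gen k 1 * (gen k (2 * k + 4))⁻¹ := by
  rw [phi_gen k (2 * k + 3) (by omega)]; simp only [tgtFun, Fin.val_mk]
  split_ifs <;> first | rfl | omega | contradiction

lemma phiY (k : ℕ) (hk : 1 ≤ k) : phi k (gen k (4 * k + 3)) = (gen k 2)⁻¹ * gen k 1 := by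
  rw [phi_gen k (4 * k + 3) (by omega)]; simp only [tgtFun, Fin.val_mk]
  split_ifs <;> first | rfl | omega | contradiction

lemma phiMid (k : ℕ) (hk : 1 ≤ k) (n : ℕ) (h4 : 4 ≤ n) (hn : n < 4 * k + 4) (h1 : n ≠ 2 * k + 3)
    (h2 : n ≠ 4 * k + 3) : phi k (gen k n) = gen k (n + 1) := by
  rw [phi_gen k n hn]; simp only [tgtFun, Fin.val_mk]
  split_ifs <;> first | rfl | omega | contradiction

lemma of_eq_gen (k : ℕ) (i : Fin (4 * k + 4)) : FreeGroup.of i = gen k i.val := by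
  rw [gen_eq k i.val i.isLt]

lemma comp1 (k : ℕ) (hk : 1 ≤ k) (i : Fin (4 * k + 4)) :
    psi k (phi k (FreeGroup.of i)) = FreeGroup.of i := by
  rw [show phi k (FreeGroup.of i) = tgtFun k i from FreeGroup.lift_apply_of, of_eq_gen]
  unfold tgtFun
  split_ifs with h0 h1 h2 h3 h4 h5
  · rw [h0]; simp only [map_mul, map_inv]; rw [psi0 k hk, psi4 k hk, psiY0 k hk]; group
  · rw [h1]; simp only [map_mul, map_inv]; rw [psi1 k hk, psi4 k hk, psiY0 k hk]; group
  · rw [h2, psi3 k hk]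
  · rw [h3]; simp only [map_mul, map_inv]; rw [psi3 k hk, psi4 k hk, psiMid k hk (2 * k + 5) (by omega) (by omega) (by omega)]
    have : 2 * k + 5 - 1 = 2 * k + 4 := by omega
    rw [this]; group
  · rw [h4]; simp only [map_mul, map_inv]; rw [psi0 k hk, psi1 k hk, psiY0 k hk]; group
  · rw [h5]; simp only [map_mul, map_inv]; rw [psi1 k hk, psi2 k hk]; group
  · have hv := i.isLt
    rw [psiMid k hk (i.val + 1) (by omega) (by omega) (by omega), Nat.add_sub_cancel]

lemma comp2 (k : ℕ) (hk : 1 ≤ k) (i : Fin (4 * k + 4)) :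
    phi k (psi k (FreeGroup.of i)) = FreeGroup.of i := by
  rw [show psi k (FreeGroup.of i) = psiFun k i from FreeGroup.lift_apply_of, of_eq_gen]
  unfold psiFun
  split_ifs with h0 h1 h2 h3 h4 h5
  · rw [h0]; simp only [map_mul, map_inv]
    rw [phi1 k hk, phi2 k hk, phi3 k hk, phiX k hk,
      phiMid k hk (2 * k + 4) (by omega) (by omega) (by omega) (by omega)]
    group
  · rw [h1]; simp only [map_mul, map_inv]
    rw [phi0 k hk, phi1 k hk, phi2 k hk, phi3 k hk, phiX k hk,
      phiMid k hk (2 * k + 4) (by omega) (by omega) (by omega) (by omega)]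
    group
  · rw [h2]; simp only [map_mul, map_inv]
    rw [phi0 k hk, phi1 k hk, phi2 k hk, phi3 k hk, phiX k hk, phiY k hk,
      phiMid k hk (2 * k + 4) (by omega) (by omega) (by omega) (by omega)]
    group
  · rw [h3, phi2 k hk]
  · rw [h4]; simp only [map_mul, map_inv]
    rw [phi2 k hk, phi3 k hk,
      phiMid k hk (2 * k + 4) (by omega) (by omega) (by omega) (by omega)]
    group
  · rw [h5]; simp only [map_mul, map_inv]
    rw [phi0 k hk, phi1 k hk, phi2 k hk, phi3 k hk, phiX k hk,
      phiMid k hk (2 * k + 4) (by omega) (by omega) (by omega) (by omega)]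
    group
  · have hv := i.isLt
    rw [phiMid k hk (i.val - 1) (by omega) (by omega) (by omega) (by omega)]
    congr 1; omega

theorem phi_bijective (k : ℕ) (hk : 1 ≤ k) : Function.Bijective (phi k) := by
  have h1 : (psi k).comp (phi k) = MonoidHom.id _ :=
    FreeGroup.ext_hom _ _ fun a => by simpa using comp1 k hk a
  have h2 : (phi k).comp (psi k) = MonoidHom.id _ :=
    FreeGroup.ext_hom _ _ fun a => by simpa using comp2 k hk a
  have hli : Function.LeftInverse (psi k) (phi k) := fun x => by
    simpa using DFunLike.congr_fun h1 x
  have hri : Function.RightInverse (psi k) (phi k) := fun x => by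
    simpa using DFunLike.congr_fun h2 x
  exact ⟨hli.injective, hri.surjective⟩
end

section
/- For each integer k ≥ 1, the endomorphism φ_k of the free group F_k maps the element σ_k = x_0·y_0·x_1·y_1 ⋯ x_{2k−1}·y_{2k−1}·a⁻¹·b·y_0⁻¹·c⁻¹·d·x_{2k−1}⁻¹·b⁻¹·c·x_{2k−2}⁻¹·y_{2k−1}⁻¹·x_{2k−3}⁻¹·y_{2k−2}⁻¹ ⋯ x_0⁻¹·y_1⁻¹·d⁻¹·a to a conjugate of σ_k or of σ_k⁻¹; that is, there exists w ∈ F_k with φ_k(σ_k) = w·σ_k·w⁻¹ or φ_k(σ_k) = w·σ_k⁻¹·w⁻¹. -/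
/-- The element
`σₖ = x₀y₀x₁y₁⋯x_{2k-1}y_{2k-1} · a⁻¹ b y₀⁻¹ c⁻¹ d · x_{2k-1}⁻¹ b⁻¹ c ·
  x_{2k-2}⁻¹ y_{2k-1}⁻¹ x_{2k-3}⁻¹ y_{2k-2}⁻¹ ⋯ x₀⁻¹ y₁⁻¹ · d⁻¹ a`. -/
def sigma (k : ℕ) : FreeGroup (Fin (4 * k + 4)) :=
  ((List.range (2 * k)).map fun i => gen k (4 + i) * gen k (2 * k + 4 + i)).prod *
    ((gen k 0)⁻¹ * gen k 1 * (gen k (2 * k + 4))⁻¹ * (gen k 2)⁻¹ * gen k 3) *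
    ((gen k (2 * k + 3))⁻¹ * (gen k 1)⁻¹ * gen k 2) *
    ((List.range (2 * k - 1)).map fun j =>
      (gen k (4 + (2 * k - 2 - j)))⁻¹ * (gen k (2 * k + 4 + (2 * k - 1 - j)))⁻¹).prod *
    ((gen k 3)⁻¹ * gen k 0)

section Helpers

variable (k : ℕ)

lemma phi_gen_s9 (n : ℕ) (h : n < 4 * k + 4) :
    phi k (gen k n) =
      if n = 0 then gen k 0 * gen k 4 * gen k (2 * k + 4)
      else if n = 1 then gen k 1 * (gen k (2 * k + 4))⁻¹ * (gen k 4)⁻¹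
      else if n = 2 then gen k 3
      else if n = 3 then gen k 3 * gen k (2 * k + 5) * gen k 4
      else if n = 2 * k + 3 then (gen k 0)⁻¹ * gen k 1 * (gen k (2 * k + 4))⁻¹
      else if n = 4 * k + 3 then (gen k 2)⁻¹ * gen k 1
      else gen k (n + 1) := by
  have h1 : gen k n = FreeGroup.of (⟨n, h⟩ : Fin (4 * k + 4)) := by
    unfold gen; congr 1; exact Fin.ext (Nat.mod_eq_of_lt h)
  rw [h1]
  show FreeGroup.lift (tgtFun k) (FreeGroup.of _) = _
  rw [FreeGroup.lift_apply_of]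
  rfl

lemma gen_congr {m n : ℕ} (h : m = n) : gen k m = gen k n := by rw [h]

variable (hk : 1 ≤ k)
include hk

lemma phi_a : phi k (gen k 0) = gen k 0 * gen k 4 * gen k (2 * k + 4) := by
  rw [phi_gen_s9 k 0 (by omega)]
  norm_num

lemma phi_b : phi k (gen k 1) = gen k 1 * (gen k (2 * k + 4))⁻¹ * (gen k 4)⁻¹ := by
  rw [phi_gen_s9 k 1 (by omega)]
  norm_num

lemma phi_c : phi k (gen k 2) = gen k 3 := by
  rw [phi_gen_s9 k 2 (by omega)]
  norm_num

lemma phi_d : phi k (gen k 3) = gen k 3 * gen k (2 * k + 5) * gen k 4 := by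
  rw [phi_gen_s9 k 3 (by omega)]
  rw [if_neg (by omega), if_neg (by omega), if_neg (by omega), if_pos rfl]

lemma phi_x (i : ℕ) (h : i < 2 * k - 1) :
    phi k (gen k (4 + i)) = gen k (4 + (i + 1)) := by
  rw [phi_gen_s9 k (4 + i) (by omega)]
  rw [if_neg (by omega), if_neg (by omega), if_neg (by omega), if_neg (by omega),
    if_neg (by omega), if_neg (by omega)]
  exact gen_congr k (by omega)

lemma phi_xlast : phi k (gen k (2 * k + 3)) =
    (gen k 0)⁻¹ * gen k 1 * (gen k (2 * k + 4))⁻¹ := by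
  rw [phi_gen_s9 k (2 * k + 3) (by omega)]
  rw [if_neg (by omega), if_neg (by omega), if_neg (by omega), if_neg (by omega),
    if_pos rfl]

lemma phi_y (i : ℕ) (h : i < 2 * k - 1) :
    phi k (gen k (2 * k + 4 + i)) = gen k (2 * k + 4 + (i + 1)) := by
  rw [phi_gen_s9 k (2 * k + 4 + i) (by omega)]
  rw [if_neg (by omega), if_neg (by omega), if_neg (by omega), if_neg (by omega),
    if_neg (by omega), if_neg (by omega)]
  exact gen_congr k (by omega)

lemma phi_ylast : phi k (gen k (4 * k + 3)) = (gen k 2)⁻¹ * gen k 1 := by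
  rw [phi_gen_s9 k (4 * k + 3) (by omega)]
  rw [if_neg (by omega), if_neg (by omega), if_neg (by omega), if_neg (by omega),
    if_neg (by omega), if_pos rfl]

lemma phi_P :
    phi k (((List.range (2 * k)).map fun i => gen k (4 + i) * gen k (2 * k + 4 + i)).prod) =
      (gen k 4 * gen k (2 * k + 4))⁻¹ *
        ((List.range (2 * k)).map fun i => gen k (4 + i) * gen k (2 * k + 4 + i)).prod *
        ((gen k 0)⁻¹ * gen k 1 * (gen k (2 * k + 4))⁻¹ * ((gen k 2)⁻¹ * gen k 1)) := by
  set f : ℕ → FreeGroup (Fin (4 * k + 4)) :=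
    fun i => gen k (4 + i) * gen k (2 * k + 4 + i) with hf
  have h2k : 2 * k = (2 * k - 1) + 1 := by omega
  rw [map_list_prod, List.map_map]
  have step1 : List.map (⇑(phi k) ∘ f) (List.range (2 * k)) =
      ((List.range (2 * k - 1)).map fun i => f (i + 1)) ++
        [(gen k 0)⁻¹ * gen k 1 * (gen k (2 * k + 4))⁻¹ * ((gen k 2)⁻¹ * gen k 1)] := by
    conv_lhs => rw [h2k, List.range_succ]
    rw [List.map_append]
    congr 1
    · apply List.map_congr_left
      intro i hi
      rw [List.mem_range] at hi
      show phi k (f i) = f (i + 1)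
      rw [hf]
      simp only [map_mul]
      rw [phi_x k hk i hi, phi_y k hk i hi]
    · show [phi k (f (2 * k - 1))] = _
      congr 1
      rw [hf]
      simp only [map_mul]
      rw [gen_congr k (show 4 + (2 * k - 1) = 2 * k + 3 by omega),
        gen_congr k (show 2 * k + 4 + (2 * k - 1) = 4 * k + 3 by omega),
        phi_xlast k hk, phi_ylast k hk]
  rw [step1, List.prod_append, List.prod_singleton]
  have step2 : ((List.range (2 * k - 1)).map fun i => f (i + 1)).prod =
      (f 0)⁻¹ * ((List.range (2 * k)).map f).prod := by
    have h3 : (List.range (2 * k)).map f =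
        f 0 :: ((List.range (2 * k - 1)).map fun i => f (i + 1)) := by
      conv_lhs => rw [h2k, List.range_succ_eq_map]
      rw [List.map_cons, List.map_map]
      rfl
    rw [h3, List.prod_cons]
    group
  rw [step2]

lemma phi_Q :
    phi k (((List.range (2 * k - 1)).map fun j =>
        (gen k (4 + (2 * k - 2 - j)))⁻¹ * (gen k (2 * k + 4 + (2 * k - 1 - j)))⁻¹).prod) =
      ((gen k (2 * k + 3))⁻¹ * ((gen k 1)⁻¹ * gen k 2)) *
        ((List.range (2 * k - 1)).map fun j =>
          (gen k (4 + (2 * k - 2 - j)))⁻¹ * (gen k (2 * k + 4 + (2 * k - 1 - j)))⁻¹).prod *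
        (gen k (2 * k + 5) * gen k 4) := by
  set g : ℕ → FreeGroup (Fin (4 * k + 4)) :=
    fun j => (gen k (4 + (2 * k - 2 - j)))⁻¹ * (gen k (2 * k + 4 + (2 * k - 1 - j)))⁻¹ with hg
  have h2k : 2 * k - 1 = (2 * k - 2) + 1 := by omega
  rw [map_list_prod, List.map_map]
  have step1 : List.map (⇑(phi k) ∘ g) (List.range (2 * k - 1)) =
      ((gen k (2 * k + 3))⁻¹ * ((gen k 1)⁻¹ * gen k 2)) ::
        (List.range (2 * k - 2)).map g := by
    conv_lhs => rw [h2k, List.range_succ_eq_map]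
    rw [List.map_cons, List.map_map]
    congr 1
    · show phi k (g 0) = _
      rw [hg]
      simp only [map_mul, map_inv]
      rw [gen_congr k (show 4 + (2 * k - 2 - 0) = 4 + (2 * k - 2) by omega),
        gen_congr k (show 2 * k + 4 + (2 * k - 1 - 0) = 4 * k + 3 by omega),
        phi_x k hk (2 * k - 2) (by omega), phi_ylast k hk,
        gen_congr k (show 4 + (2 * k - 2 + 1) = 2 * k + 3 by omega)]
      group
    · apply List.map_congr_left
      intro j hj
      rw [List.mem_range] at hj
      show phi k (g (j + 1)) = g j
      rw [hg]
      simp only [map_mul, map_inv]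
      rw [gen_congr k (show 4 + (2 * k - 2 - (j + 1)) = 4 + (2 * k - 3 - j) by omega),
        gen_congr k (show 2 * k + 4 + (2 * k - 1 - (j + 1)) = 2 * k + 4 + (2 * k - 2 - j) by omega),
        phi_x k hk (2 * k - 3 - j) (by omega), phi_y k hk (2 * k - 2 - j) (by omega),
        gen_congr k (show 4 + (2 * k - 3 - j + 1) = 4 + (2 * k - 2 - j) by omega),
        gen_congr k (show 2 * k + 4 + (2 * k - 2 - j + 1) = 2 * k + 4 + (2 * k - 1 - j) by omega)]
  rw [step1, List.prod_cons]
  have step2 : ((List.range (2 * k - 2)).map g).prod =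
      ((List.range (2 * k - 1)).map g).prod * (g (2 * k - 2))⁻¹ := by
    have h3 : (List.range (2 * k - 1)).map g =
        ((List.range (2 * k - 2)).map g) ++ [g (2 * k - 2)] := by
      conv_lhs => rw [h2k, List.range_succ]
      rw [List.map_append, List.map_singleton]
    rw [h3, List.prod_append, List.prod_singleton]
    group
  rw [step2]
  have hglast : (g (2 * k - 2))⁻¹ = gen k (2 * k + 5) * gen k 4 := by
    rw [hg]
    simp only
    rw [gen_congr k (show 4 + (2 * k - 2 - (2 * k - 2)) = 4 by omega),
      gen_congr k (show 2 * k + 4 + (2 * k - 1 - (2 * k - 2)) = 2 * k + 5 by omega)]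
    group
  rw [hglast]
  group

end Helpers

theorem phi_preserves_sigma_conjugacy (k : ℕ) (hk : 1 ≤ k) :
    ∃ w : FreeGroup (Fin (4 * k + 4)),
      phi k (sigma k) = w * sigma k * w⁻¹ ∨ phi k (sigma k) = w * (sigma k)⁻¹ * w⁻¹ := by
  refine ⟨(gen k 4 * gen k (2 * k + 4))⁻¹, Or.inl ?_⟩
  unfold sigma
  simp only [map_mul, map_inv]
  rw [phi_P k hk, phi_Q k hk, phi_a k hk, phi_b k hk, phi_c k hk, phi_d k hk,
    phi_xlast k hk]
  have hy0 : phi k (gen k (2 * k + 4)) = gen k (2 * k + 5) := by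
    rw [gen_congr k (show 2 * k + 4 = 2 * k + 4 + 0 by omega), phi_y k hk 0 (by omega)]
  rw [hy0]
  group
end

section
/- For each integer k ≥ 1 and each integer n ≥ 1, the matrix M_k^n is irreducible: for every pair of indices i, j there exists an integer p ≥ 1 such that the (i, j) entry of (M_k^n)^p is strictly positive. -/
/-!
Read `0 < M i j` as an edge `i → j`, so that `0 < (M ^ t) i j` means a walk of length `t`. The
subdiagonal of `Mₖ` gives the path `y_{2k-1} → ⋯ → y₀ → x_{2k-1} → ⋯ → x₀`, and a few more edges
(`a → x_{2k-1}`, `b, c → y_{2k-1}`, `d → c`, `x₀ → a, b, d`) make every vertex reach `x₀` and be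
reached from it. Since `a` carries a loop, walks through `a` can be lengthened to any multiple
of `n`.
-/

/-- The transition matrix `Mₖ`. Rows/columns are indexed by `Fin (4k+4)` with the labeling
`0 = a`, `1 = b`, `2 = c`, `3 = d`, `4 + i = xᵢ` (`0 ≤ i ≤ 2k-1`), `2k+4+i = yᵢ`
(`0 ≤ i ≤ 2k-1`). Nonzero entries: column `a` has `1` in rows `a, x₀, y₀`; column `b` has `1`
in rows `b, x₀, y₀`; column `c` has `1` in row `d`; column `d` has `1` in rows `d, x₀, y₁`;
column `xᵢ` (`0 ≤ i ≤ 2k-2`) has `1` in row `xᵢ₊₁`; column `x_{2k-1}` has `1` in rows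
`a, b, y₀`; column `yᵢ` (`0 ≤ i ≤ 2k-2`) has `1` in row `yᵢ₊₁`; column `y_{2k-1}` has `1`
in rows `b, c`. -/
def Mk (k : ℕ) : Matrix (Fin (4 * k + 4)) (Fin (4 * k + 4)) ℕ :=
  fun i j =>
    if j.val = 0 then (if i.val = 0 ∨ i.val = 4 ∨ i.val = 2 * k + 4 then 1 else 0)
    else if j.val = 1 then (if i.val = 1 ∨ i.val = 4 ∨ i.val = 2 * k + 4 then 1 else 0)
    else if j.val = 2 then (if i.val = 3 then 1 else 0)
    else if j.val = 3 then (if i.val = 3 ∨ i.val = 4 ∨ i.val = 2 * k + 5 then 1 else 0)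
    else if j.val = 2 * k + 3 then (if i.val = 0 ∨ i.val = 1 ∨ i.val = 2 * k + 4 then 1 else 0)
    else if j.val = 4 * k + 3 then (if i.val = 1 ∨ i.val = 2 then 1 else 0)
    else (if i.val = j.val + 1 then 1 else 0)

open Relation

namespace Matrix

variable {ι : Type*} [Fintype ι] [DecidableEq ι] (M : Matrix ι ι ℕ)

def Adj (i j : ι) : Prop := 0 < M i j

variable {M}

lemma pow_add_apply_pos {s t : ℕ} {i l j : ι} (hs : 0 < (M ^ s) i l) (ht : 0 < (M ^ t) l j) :
    0 < (M ^ (s + t)) i j := by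
  rw [pow_add, mul_apply]
  exact (Nat.mul_pos hs ht).trans_le
    (Finset.single_le_sum (fun x _ => Nat.zero_le ((M ^ s) i x * (M ^ t) x j)) (Finset.mem_univ l))

lemma exists_pow_apply_pos_of_reflTransGen {i j : ι} (h : ReflTransGen M.Adj i j) :
    ∃ t, 0 < (M ^ t) i j := by
  induction h with
  | refl => exact ⟨0, by simp⟩
  | tail _ hlj ih =>
    obtain ⟨t, ht⟩ := ih
    exact ⟨t + 1, pow_add_apply_pos ht ((pow_one M).symm ▸ hlj)⟩

lemma pow_apply_self_pos {v : ι} (hv : 0 < M v v) (m : ℕ) : 0 < (M ^ m) v v := by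
  induction m with
  | zero => simp
  | succ m ih => exact pow_add_apply_pos ih ((pow_one M).symm ▸ hv)

lemma pow_apply_pos_of_le {i v : ι} {t m : ℕ} (hv : 0 < M v v) (ht : 0 < (M ^ t) i v)
    (htm : t ≤ m) : 0 < (M ^ m) i v := by
  obtain ⟨d, rfl⟩ := Nat.exists_eq_add_of_le htm
  exact pow_add_apply_pos ht (pow_apply_self_pos hv d)

lemma exists_pow_pow_apply_pos {v : ι} (hconn : ∀ i j, ReflTransGen M.Adj i j) (hv : 0 < M v v)
    {n : ℕ} (hn : 1 ≤ n) (i j : ι) : ∃ p, 1 ≤ p ∧ 0 < ((M ^ n) ^ p) i j := by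
  obtain ⟨t, ht⟩ := exists_pow_apply_pos_of_reflTransGen (hconn i v)
  obtain ⟨s, hs⟩ := exists_pow_apply_pos_of_reflTransGen (hconn v j)
  have hle : t + s + 1 ≤ n * (t + s + 1) := Nat.le_mul_of_pos_left _ hn
  refine ⟨t + s + 1, le_add_self, ?_⟩
  rw [← pow_mul, ← Nat.sub_add_cancel (by omega : s ≤ n * (t + s + 1))]
  exact pow_add_apply_pos (pow_apply_pos_of_le hv ht (by omega)) hs

end Matrix

section Mk

variable {k : ℕ}

lemma Mk_adj (hk : 1 ≤ k) {i j : ℕ}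
    (h : (i = 0 ∧ j = 0) ∨ (i = 4 ∧ (j = 0 ∨ j = 1 ∨ j = 3)) ∨ (i = 3 ∧ j = 2) ∨
      (i = 0 ∧ j = 2 * k + 3) ∨ ((i = 1 ∨ i = 2) ∧ j = 4 * k + 3) ∨ (4 ≤ j ∧ i = j + 1))
    (hi : i < 4 * k + 4 := by omega) (hj : j < 4 * k + 4 := by omega) :
    (Mk k).Adj ⟨i, hi⟩ ⟨j, hj⟩ := by
  simp only [Matrix.Adj, Mk]
  split_ifs <;> omega

lemma Mk_reflTransGen_of_le (hk : 1 ≤ k) {i j : ℕ} (hi : i < 4 * k + 4) (hj : 4 ≤ j) (hji : j ≤ i) :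
    ReflTransGen (Mk k).Adj ⟨i, hi⟩ ⟨j, by omega⟩ := by
  obtain ⟨d, rfl⟩ := Nat.exists_eq_add_of_le hji
  induction d with
  | zero => exact .refl
  | succ d ih => exact .head (Mk_adj hk (by omega)) (ih (by omega) (by omega))

lemma Mk_reflTransGen_x₀ (hk : 1 ≤ k) {i : ℕ} (hi : i < 4 * k + 4) :
    ReflTransGen (Mk k).Adj ⟨i, hi⟩ ⟨4, by omega⟩ := by
  have from_y_top : ReflTransGen (Mk k).Adj ⟨4 * k + 3, by omega⟩ ⟨4, by omega⟩ :=
    Mk_reflTransGen_of_le hk _ le_rfl (by omega)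
  rcases (by omega : i = 0 ∨ i = 1 ∨ i = 2 ∨ i = 3 ∨ 4 ≤ i) with rfl | rfl | rfl | rfl | h4
  · exact .head (Mk_adj hk (j := 2 * k + 3) (by omega))
      (Mk_reflTransGen_of_le hk _ le_rfl (by omega))
  · exact .head (Mk_adj hk (by omega)) from_y_top
  · exact .head (Mk_adj hk (by omega)) from_y_top
  · exact .head (Mk_adj hk (j := 2) (by omega)) (.head (Mk_adj hk (by omega)) from_y_top)
  · exact Mk_reflTransGen_of_le hk hi le_rfl h4

lemma Mk_x₀_reflTransGen (hk : 1 ≤ k) {j : ℕ} (hj : j < 4 * k + 4) :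
    ReflTransGen (Mk k).Adj ⟨4, by omega⟩ ⟨j, hj⟩ := by
  rcases (by omega : j = 0 ∨ j = 1 ∨ j = 2 ∨ j = 3 ∨ 4 ≤ j) with rfl | rfl | rfl | rfl | h4
  · exact .single (Mk_adj hk (by omega))
  · exact .single (Mk_adj hk (by omega))
  · exact .tail (.single (Mk_adj hk (j := 3) (by omega))) (Mk_adj hk (by omega))
  · exact .single (Mk_adj hk (by omega))
  · exact .head (Mk_adj hk (j := 1) (by omega))
      (.head (Mk_adj hk (j := 4 * k + 3) (by omega)) (Mk_reflTransGen_of_le hk _ h4 (by omega)))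

lemma Mk_reflTransGen (hk : 1 ≤ k) (i j : Fin (4 * k + 4)) : ReflTransGen (Mk k).Adj i j :=
  (Mk_reflTransGen_x₀ hk i.isLt).trans (Mk_x₀_reflTransGen hk j.isLt)

end Mk

theorem Mk_pow_irreducible (k : ℕ) (hk : 1 ≤ k) (n : ℕ) (hn : 1 ≤ n) :
    ∀ i j : Fin (4 * k + 4), ∃ p : ℕ, 1 ≤ p ∧ 0 < ((Mk k ^ n) ^ p) i j :=
  Matrix.exists_pow_pow_apply_pos (Mk_reflTransGen hk) (Mk_adj hk (i := 0) (j := 0) (by omega)) hn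
end

section
/- For each integer k ≥ 1, there exists an integer N ≥ 1 such that every entry of M_k^N is strictly positive (i.e., M_k is a primitive matrix). -/
lemma pow_entry_pos {n : ℕ} (M : Matrix (Fin n) (Fin n) ℕ) {p q : ℕ} {i j l : Fin n}
    (h1 : 0 < (M ^ p) i l) (h2 : 0 < (M ^ q) l j) : 0 < (M ^ (p + q)) i j := by
  rw [pow_add]
  have h : (M ^ p) i l * (M ^ q) l j ≤ ((M ^ p) * (M ^ q)) i j := by
    rw [Matrix.mul_apply]
    exact Finset.single_le_sum (f := fun x => (M ^ p) i x * (M ^ q) x j)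
      (fun x _ => Nat.zero_le _) (Finset.mem_univ l)
  exact lt_of_lt_of_le (Nat.mul_pos h1 h2) h

lemma pow_one_entry_pos {n : ℕ} (M : Matrix (Fin n) (Fin n) ℕ) {i j : Fin n}
    (h : 0 < M i j) : 0 < (M ^ 1) i j := by rwa [pow_one]

/-- self-loop at `a` -/
lemma Mk_loop (k : ℕ) (n : ℕ) {i j : Fin (4 * k + 4)} (hi : i.val = 0) (hj : j.val = 0) :
    0 < (Mk k ^ n) i j := by
  have hij : i = j := Fin.ext (by omega)
  subst hij
  induction n with
  | zero => simp [Matrix.one_apply_eq]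
  | succ n ih =>
      have e : 0 < (Mk k ^ 1) i i := by
        apply pow_one_entry_pos
        simp only [Mk, Fin.val_mk]
        split_ifs <;> first | exact ‹False›.elim | omega | simp_all
      have := pow_entry_pos (Mk k) e ih
      rwa [Nat.add_comm 1 n] at this

/-- walk `a → xₜ` of length `1 + t` -/
lemma Mk_chainx (k : ℕ) (hk : 1 ≤ k) : ∀ t, t < 2 * k → ∀ i j : Fin (4 * k + 4),
    i.val = 4 + t → j.val = 0 → 0 < (Mk k ^ (1 + t)) i j := by
  intro t
  induction t with
  | zero =>
      intro _ i j hi hj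
      apply pow_one_entry_pos
      simp only [Mk, Fin.val_mk]
      split_ifs <;> first | exact ‹False›.elim | omega | simp_all
  | succ t ih =>
      intro ht i j hi hj
      have hmid : (4 + t) < 4 * k + 4 := by omega
      set l : Fin (4 * k + 4) := ⟨4 + t, hmid⟩ with hl
      have e : 0 < (Mk k ^ 1) i l := by
        apply pow_one_entry_pos
        simp only [Mk, hl, Fin.val_mk]
        split_ifs <;> first | exact ‹False›.elim | omega | simp_all
      have h2 : 0 < (Mk k ^ (1 + t)) l j := ih (by omega) l j rfl hj
      have := pow_entry_pos (Mk k) e h2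
      have harr : 1 + (1 + t) = 1 + (t + 1) := by omega
      rwa [harr] at this

/-- walk `a → yₜ` of length `1 + t` -/
lemma Mk_chainy (k : ℕ) (hk : 1 ≤ k) : ∀ t, t < 2 * k → ∀ i j : Fin (4 * k + 4),
    i.val = 2 * k + 4 + t → j.val = 0 → 0 < (Mk k ^ (1 + t)) i j := by
  intro t
  induction t with
  | zero =>
      intro _ i j hi hj
      apply pow_one_entry_pos
      simp only [Mk, Fin.val_mk]
      split_ifs <;> first | exact ‹False›.elim | omega | simp_all
  | succ t ih =>
      intro ht i j hi hj
      have hmid : (2 * k + 4 + t) < 4 * k + 4 := by omega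
      set l : Fin (4 * k + 4) := ⟨2 * k + 4 + t, hmid⟩ with hl
      have e : 0 < (Mk k ^ 1) i l := by
        apply pow_one_entry_pos
        simp only [Mk, hl, Fin.val_mk]
        split_ifs <;> first | exact ‹False›.elim | omega | simp_all
      have h2 : 0 < (Mk k ^ (1 + t)) l j := ih (by omega) l j rfl hj
      have := pow_entry_pos (Mk k) e h2
      have harr : 1 + (1 + t) = 1 + (t + 1) := by omega
      rwa [harr] at this

/-- walk `x_{2k-1-s} → a` of length `s + 1` -/
lemma Mk_chainx' (k : ℕ) (hk : 1 ≤ k) : ∀ s, s < 2 * k → ∀ i j : Fin (4 * k + 4),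
    i.val = 0 → j.val = 4 + (2 * k - 1 - s) → 0 < (Mk k ^ (s + 1)) i j := by
  intro s
  induction s with
  | zero =>
      intro _ i j hi hj
      apply pow_one_entry_pos
      simp only [Mk, Fin.val_mk]
      split_ifs <;> first | exact ‹False›.elim | omega | simp_all
  | succ s ih =>
      intro hs i j hi hj
      have hmid : (4 + (2 * k - 1 - s)) < 4 * k + 4 := by omega
      set l : Fin (4 * k + 4) := ⟨4 + (2 * k - 1 - s), hmid⟩ with hl
      have e : 0 < (Mk k ^ 1) l j := by
        apply pow_one_entry_pos
        simp only [Mk, hl, Fin.val_mk]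
        split_ifs <;> first | exact ‹False›.elim | omega | simp_all
      have h1 : 0 < (Mk k ^ (s + 1)) i l := ih (by omega) i l hi rfl
      have := pow_entry_pos (Mk k) h1 e
      rwa [show s + 1 + 1 = s + 1 + 1 from rfl] at this

/-- walk `y_{2k-1-s} → b` of length `s + 1` -/
lemma Mk_chainy' (k : ℕ) (hk : 1 ≤ k) : ∀ s, s < 2 * k → ∀ i j : Fin (4 * k + 4),
    i.val = 1 → j.val = 2 * k + 4 + (2 * k - 1 - s) → 0 < (Mk k ^ (s + 1)) i j := by
  intro s
  induction s with
  | zero =>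
      intro _ i j hi hj
      apply pow_one_entry_pos
      simp only [Mk, Fin.val_mk]
      split_ifs <;> first | exact ‹False›.elim | omega | simp_all
  | succ s ih =>
      intro hs i j hi hj
      have hmid : (2 * k + 4 + (2 * k - 1 - s)) < 4 * k + 4 := by omega
      set l : Fin (4 * k + 4) := ⟨2 * k + 4 + (2 * k - 1 - s), hmid⟩ with hl
      have e : 0 < (Mk k ^ 1) l j := by
        apply pow_one_entry_pos
        simp only [Mk, hl, Fin.val_mk]
        split_ifs <;> first | exact ‹False›.elim | omega | simp_all
      have h1 : 0 < (Mk k ^ (s + 1)) i l := ih (by omega) i l hi rfl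
      exact pow_entry_pos (Mk k) h1 e

/-- every vertex is reachable from `a` in at most `2k + 2` steps -/
lemma Mk_from_a (k : ℕ) (hk : 1 ≤ k) (i : Fin (4 * k + 4)) {j : Fin (4 * k + 4)}
    (hj : j.val = 0) : ∃ d, d ≤ 2 * k + 2 ∧ 0 < (Mk k ^ d) i j := by
  have ha : (0 : ℕ) < 4 * k + 4 := by omega
  have h2k3 : (2 * k + 3) < 4 * k + 4 := by omega
  have h4k3 : (4 * k + 3) < 4 * k + 4 := by omega
  -- walk a → x_{2k-1}, length 2k
  have hx : 0 < (Mk k ^ (2 * k)) (⟨2 * k + 3, h2k3⟩ : Fin (4 * k + 4)) j := by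
    have := Mk_chainx k hk (2 * k - 1) (by omega) ⟨2 * k + 3, h2k3⟩ j (by simp; omega) hj
    have harr : 1 + (2 * k - 1) = 2 * k := by omega
    rwa [harr] at this
  -- walk a → y_{2k-1}, length 2k
  have hy : 0 < (Mk k ^ (2 * k)) (⟨4 * k + 3, h4k3⟩ : Fin (4 * k + 4)) j := by
    have := Mk_chainy k hk (2 * k - 1) (by omega) ⟨4 * k + 3, h4k3⟩ j (by simp; omega) hj
    have harr : 1 + (2 * k - 1) = 2 * k := by omega
    rwa [harr] at this
  -- walk a → c of length 2k+1
  have hc : ∀ i' : Fin (4 * k + 4), i'.val = 2 → 0 < (Mk k ^ (2 * k + 1)) i' j := by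
    intro i' hi'
    have e : 0 < (Mk k ^ 1) i' (⟨4 * k + 3, h4k3⟩ : Fin (4 * k + 4)) := by
      apply pow_one_entry_pos
      simp only [Mk, Fin.val_mk]
      split_ifs <;> first | exact ‹False›.elim | omega | simp_all
    have := pow_entry_pos (Mk k) e hy
    rwa [show 1 + 2 * k = 2 * k + 1 by omega] at this
  rcases Nat.lt_or_ge i.val 4 with h4 | h4
  · have hcases : i.val = 0 ∨ i.val = 1 ∨ i.val = 2 ∨ i.val = 3 := by omega
    rcases hcases with h | h | h | h
    · exact ⟨0, by omega, by
        have : i = j := Fin.ext (by omega)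
        rw [this]; simp [Matrix.one_apply_eq]⟩
    · -- b : via x_{2k-1} → b, length 2k+1
      refine ⟨2 * k + 1, by omega, ?_⟩
      have e : 0 < (Mk k ^ 1) i (⟨2 * k + 3, h2k3⟩ : Fin (4 * k + 4)) := by
        apply pow_one_entry_pos
        simp only [Mk, Fin.val_mk]
        split_ifs <;> first | exact ‹False›.elim | omega | simp_all
      have := pow_entry_pos (Mk k) e hx
      rwa [show 1 + 2 * k = 2 * k + 1 by omega] at this
    · exact ⟨2 * k + 1, by omega, hc i h⟩
    · -- d : c → d, length 2k+2
      refine ⟨2 * k + 2, by omega, ?_⟩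
      have hc2 : (2 : ℕ) < 4 * k + 4 := by omega
      have e : 0 < (Mk k ^ 1) i (⟨2, hc2⟩ : Fin (4 * k + 4)) := by
        apply pow_one_entry_pos
        simp only [Mk, Fin.val_mk]
        split_ifs <;> first | exact ‹False›.elim | omega | simp_all
      have := pow_entry_pos (Mk k) e (hc ⟨2, hc2⟩ rfl)
      rwa [show 1 + (2 * k + 1) = 2 * k + 2 by omega] at this
  · rcases Nat.lt_or_ge i.val (2 * k + 4) with hx' | hy'
    · refine ⟨1 + (i.val - 4), by omega, ?_⟩
      exact Mk_chainx k hk (i.val - 4) (by omega) i j (by omega) hj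
    · refine ⟨1 + (i.val - (2 * k + 4)), by omega, ?_⟩
      exact Mk_chainy k hk (i.val - (2 * k + 4)) (by omega) i j (by omega) hj

/-- `a` is reachable from every vertex in at most `4k + 1` steps -/
lemma Mk_to_a (k : ℕ) (hk : 1 ≤ k) {i : Fin (4 * k + 4)} (j : Fin (4 * k + 4))
    (hi : i.val = 0) : ∃ e, e ≤ 4 * k + 1 ∧ 0 < (Mk k ^ e) i j := by
  have hx0 : (4 : ℕ) < 4 * k + 4 := by omega
  -- walk x₀ → a, length 2k
  have hx : 0 < (Mk k ^ (2 * k)) i (⟨4, hx0⟩ : Fin (4 * k + 4)) := by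
    have := Mk_chainx' k hk (2 * k - 1) (by omega) i ⟨4, hx0⟩ hi (by simp)
    rwa [show 2 * k - 1 + 1 = 2 * k by omega] at this
  -- walk b → a, length 2k+1 (b → x₀ → ⋯ → a)
  have hb : ∀ j' : Fin (4 * k + 4), j'.val = 1 → 0 < (Mk k ^ (2 * k + 1)) i j' := by
    intro j' hj'
    have e : 0 < (Mk k ^ 1) (⟨4, hx0⟩ : Fin (4 * k + 4)) j' := by
      apply pow_one_entry_pos
      simp only [Mk, Fin.val_mk]
      split_ifs <;> first | exact ‹False›.elim | omega | simp_all
    exact pow_entry_pos (Mk k) hx e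
  -- walk d → a, length 2k+1 (d → x₀ → ⋯ → a)
  have hd : ∀ j' : Fin (4 * k + 4), j'.val = 3 → 0 < (Mk k ^ (2 * k + 1)) i j' := by
    intro j' hj'
    have e : 0 < (Mk k ^ 1) (⟨4, hx0⟩ : Fin (4 * k + 4)) j' := by
      apply pow_one_entry_pos
      simp only [Mk, Fin.val_mk]
      split_ifs <;> first | exact ‹False›.elim | omega | simp_all
    exact pow_entry_pos (Mk k) hx e
  rcases Nat.lt_or_ge j.val 4 with h4 | h4
  · have hcases : j.val = 0 ∨ j.val = 1 ∨ j.val = 2 ∨ j.val = 3 := by omega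
    rcases hcases with h | h | h | h
    · exact ⟨0, by omega, by
        have : i = j := Fin.ext (by omega)
        rw [this]; simp [Matrix.one_apply_eq]⟩
    · exact ⟨2 * k + 1, by omega, hb j h⟩
    · -- c → d → ⋯ → a, length 2k+2
      refine ⟨2 * k + 2, by omega, ?_⟩
      have hd3 : (3 : ℕ) < 4 * k + 4 := by omega
      have e : 0 < (Mk k ^ 1) (⟨3, hd3⟩ : Fin (4 * k + 4)) j := by
        apply pow_one_entry_pos
        simp only [Mk, Fin.val_mk]
        split_ifs <;> first | exact ‹False›.elim | omega | simp_all
      have := pow_entry_pos (Mk k) (hd ⟨3, hd3⟩ rfl) e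
      rwa [show 2 * k + 1 + 1 = 2 * k + 2 by omega] at this
    · exact ⟨2 * k + 1, by omega, hd j h⟩
  · rcases Nat.lt_or_ge j.val (2 * k + 4) with hx' | hy'
    · -- j = xₜ with t = j.val - 4, length 2k - t
      set t := j.val - 4 with htdef
      refine ⟨2 * k - t, by omega, ?_⟩
      have := Mk_chainx' k hk (2 * k - 1 - t) (by omega) i j hi (by omega)
      rwa [show 2 * k - 1 - t + 1 = 2 * k - t by omega] at this
    · -- j = yₜ with t = j.val - (2k+4): y → ⋯ → b (2k - t), then b → a (2k+1)
      set t := j.val - (2 * k + 4) with htdef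
      refine ⟨2 * k - t + (2 * k + 1), by omega, ?_⟩
      have hb1 : (1 : ℕ) < 4 * k + 4 := by omega
      have h1 : 0 < (Mk k ^ (2 * k - t)) (⟨1, hb1⟩ : Fin (4 * k + 4)) j := by
        have := Mk_chainy' k hk (2 * k - 1 - t) (by omega) ⟨1, hb1⟩ j rfl (by omega)
        rwa [show 2 * k - 1 - t + 1 = 2 * k - t by omega] at this
      have h2 : 0 < (Mk k ^ (2 * k + 1)) i (⟨1, hb1⟩ : Fin (4 * k + 4)) :=
        hb ⟨1, hb1⟩ rfl
      have := pow_entry_pos (Mk k) h2 h1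
      rwa [show 2 * k + 1 + (2 * k - t) = 2 * k - t + (2 * k + 1) by omega] at this

theorem Mk_primitive (k : ℕ) (hk : 1 ≤ k) :
    ∃ N : ℕ, 1 ≤ N ∧ ∀ i j : Fin (4 * k + 4), 0 < (Mk k ^ N) i j := by
  refine ⟨6 * k + 3, by omega, ?_⟩
  intro i j
  have ha0 : (0 : ℕ) < 4 * k + 4 := by omega
  set a : Fin (4 * k + 4) := ⟨0, ha0⟩ with haeq
  obtain ⟨d, hd, hdi⟩ := Mk_from_a k hk i (j := a) rfl
  obtain ⟨e, he, hej⟩ := Mk_to_a k hk j (i := a) rfl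
  have hloop : 0 < (Mk k ^ (6 * k + 3 - d - e)) a a := Mk_loop k _ rfl rfl
  have h1 : 0 < (Mk k ^ (d + (6 * k + 3 - d - e))) i a := pow_entry_pos (Mk k) hdi hloop
  have h2 : 0 < (Mk k ^ (d + (6 * k + 3 - d - e) + e)) i j := pow_entry_pos (Mk k) h1 hej
  rwa [show d + (6 * k + 3 - d - e) + e = 6 * k + 3 by omega] at h2
end
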